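/- Under the symmetry hypothesis, the Berezin transform commutes with R: if f, g : Fin n × Fin n → ℂ satisfy C_u f = D_u g (i.e. f = I_u g), then C_u (R f) = D_u (R g), where (R f) (k,l) = f (σ⁻¹ k, τ⁻¹ l). -/

import Mathlib

open Finset Matrix

/-- The symbol-to-operator map `C_u`. -/
noncomputable def Cmap {ι : Type*} [Fintype ι] (u : Matrix ι ι ℂ) (f : ι × ι → ℂ) :
    Matrix ι ι ℂ :=
  fun k k' => ∑ l, u k l * f (k, l) * (starRingEnd ℂ) (u k' l)

/-- The symbol-to-operator map `D_u`. -/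
noncomputable def Dmap {ι : Type*} [Fintype ι] (u : Matrix ι ι ℂ) (f : ι × ι → ℂ) :
    Matrix ι ι ℂ :=
  fun k k' => ∑ l, u k l * f (k', l) * (starRingEnd ℂ) (u k' l)

/-- The representation operator `R` associated to a pair of permutations. -/
def Rop {ι : Type*} (σ τ : Equiv.Perm ι) (f : ι × ι → ℂ) : ι × ι → ℂ :=
  fun p => f (σ⁻¹ p.1, τ⁻¹ p.2)

/-! The symmetry `u k l = a k * u (σ⁻¹ k) (τ⁻¹ l) * conj (b l)` turns every entry of `C_u (R f)` and
`D_u (R g)` into the corresponding entry of `C_u f`, resp. `D_u g`, at `(σ⁻¹ k, σ⁻¹ k')`, times the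
same phase `a k * conj (a k')`: the phases `b` cancel since `‖b l‖ = 1`, and the column
permutation `τ` is absorbed by reindexing the sum. -/

section Symmetry

variable {ι : Type*} [Fintype ι] {u : Matrix ι ι ℂ} {σ τ : Equiv.Perm ι} {a b : ι → ℂ}

theorem sum_mul_comp_perm_mul_conj (hb : ∀ l, ‖b l‖ = 1)
    (hsym : ∀ k l, a k * u (σ⁻¹ k) (τ⁻¹ l) * (starRingEnd ℂ) (b l) = u k l)
    (h : ι → ℂ) (k k' : ι) :
    ∑ l, u k l * h (τ⁻¹ l) * (starRingEnd ℂ) (u k' l) =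
      a k * (starRingEnd ℂ) (a k') * ∑ l, u (σ⁻¹ k) l * h l * (starRingEnd ℂ) (u (σ⁻¹ k') l) := by
  have hb_conj_mul : ∀ l, (starRingEnd ℂ) (b l) * b l = 1 := fun l => by
    rw [mul_comm, Complex.mul_conj, ← Complex.sq_norm, hb l, one_pow, Complex.ofReal_one]
  conv_rhs => rw [Finset.mul_sum, ← Equiv.sum_comp τ⁻¹]
  refine Finset.sum_congr rfl fun l _ => ?_
  rw [← hsym k l, ← hsym k' l, map_mul, map_mul, Complex.conj_conj]
  linear_combination (a k * u (σ⁻¹ k) (τ⁻¹ l) * h (τ⁻¹ l) * (starRingEnd ℂ) (a k') *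
    (starRingEnd ℂ) (u (σ⁻¹ k') (τ⁻¹ l))) * hb_conj_mul l

theorem Cmap_Rop (hb : ∀ l, ‖b l‖ = 1)
    (hsym : ∀ k l, a k * u (σ⁻¹ k) (τ⁻¹ l) * (starRingEnd ℂ) (b l) = u k l)
    (f : ι × ι → ℂ) (k k' : ι) :
    Cmap u (Rop σ τ f) k k' = a k * (starRingEnd ℂ) (a k') * Cmap u f (σ⁻¹ k) (σ⁻¹ k') :=
  sum_mul_comp_perm_mul_conj hb hsym (fun l => f (σ⁻¹ k, l)) k k'

theorem Dmap_Rop (hb : ∀ l, ‖b l‖ = 1)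
    (hsym : ∀ k l, a k * u (σ⁻¹ k) (τ⁻¹ l) * (starRingEnd ℂ) (b l) = u k l)
    (f : ι × ι → ℂ) (k k' : ι) :
    Dmap u (Rop σ τ f) k k' = a k * (starRingEnd ℂ) (a k') * Dmap u f (σ⁻¹ k) (σ⁻¹ k') :=
  sum_mul_comp_perm_mul_conj hb hsym (fun l => f (σ⁻¹ k', l)) k k'

end Symmetry

theorem stmt10_general (n : ℕ) (u : Matrix (Fin n) (Fin n) ℂ)
    (σ τ : Equiv.Perm (Fin n)) (a b : Fin n → ℂ)
    (hb : ∀ l, ‖b l‖ = 1)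
    (hsym : ∀ k l, a k * u (σ⁻¹ k) (τ⁻¹ l) * (starRingEnd ℂ) (b l) = u k l)
    (f g : Fin n × Fin n → ℂ) (hfg : Cmap u f = Dmap u g) :
    Cmap u (Rop σ τ f) = Dmap u (Rop σ τ g) := by
  ext k k'
  rw [Cmap_Rop hb hsym, Dmap_Rop hb hsym, hfg]

/-- the Berezin transform `I_u` commutes with the representation `R`: if
`f = I_u g` (i.e. `C_u f = D_u g`), then `R f = I_u (R g)` (i.e. `C_u (R f) = D_u (R g)`). -/
theorem stmt10 (n : ℕ) (hn : 1 ≤ n) (u : Matrix (Fin n) (Fin n) ℂ)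
    (hu : u * uᴴ = 1) (hne : ∀ k l, u k l ≠ 0)
    (σ τ : Equiv.Perm (Fin n)) (a b : Fin n → ℂ)
    (ha : ∀ k, ‖a k‖ = 1) (hb : ∀ l, ‖b l‖ = 1)
    (hsym : ∀ k l, a k * u (σ⁻¹ k) (τ⁻¹ l) * (starRingEnd ℂ) (b l) = u k l)
    (f g : Fin n × Fin n → ℂ) (hfg : Cmap u f = Dmap u g) :
    Cmap u (Rop σ τ f) = Dmap u (Rop σ τ g) :=
  stmt10_general n u σ τ a b hb hsym f g hfg
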